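/- Let G be a group, ω : G → ℝ a weight, x ∈ G, and C ≥ 0 a constant such that |ω(y) − ω(x⁻¹y)| ≤ C for all y ∈ G. Then the commutator [D_ω, π(δ_x)] is bounded on ℂ[G] with ℓ²-operator norm at most C: for every ξ ∈ ℂ[G], Σ_{y∈G} |ω(y)·(δ_x * ξ)(y) − (δ_x * (D_ω ξ))(y)|² ≤ C² · Σ_{y∈G} |ξ(y)|². -/

import Mathlib

/-!
Left translation by `x` only moves coefficients, so the commutator `[D_ω, π(δ_x)]` acts on `ξ`
as `δ_x * ξ` multiplied pointwise by `y ↦ ω y - ω (x⁻¹ y)`. A multiplication operator has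
ℓ²-norm at most the sup of its symbol, and translation preserves the ℓ²-norm.
-/

/-- The Dirac operator of a weight `ω : G → ℝ`, acting on the group algebra by pointwise
multiplication: `(D_ω ξ)(y) = ω(y) ξ(y)`. -/
noncomputable def dirac {G : Type*} [Group G] (ω : G → ℝ) (ξ : MonoidAlgebra ℂ G) :
    MonoidAlgebra ℂ G :=
  MonoidAlgebra.ofCoeff (Finsupp.ofSupportFinite (fun y => (ω y : ℂ) * ξ.coeff y)
    (Set.Finite.subset (Finsupp.finite_support ξ.coeff) fun _ hy =>
      Function.mem_support.mpr (right_ne_zero_of_mul (Function.mem_support.mp hy))))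

theorem finsum_norm_mul_sq_le {α 𝕜 : Type*} [NormedDivisionRing 𝕜] {a g : α → 𝕜} {C : ℝ}
    (ha : ∀ y, ‖a y‖ ≤ C) (hg : g.HasFiniteSupport) :
    ∑ᶠ y, ‖a y * g y‖ ^ 2 ≤ C ^ 2 * ∑ᶠ y, ‖g y‖ ^ 2 := by
  rw [mul_finsum]
  refine finsum_le_finsum' ((hg.fun_mul_right a).fun_comp (g := fun z => ‖z‖ ^ 2) (by simp))
    ((hg.fun_comp (g := fun z => ‖z‖ ^ 2) (by simp)).fun_mul_right _) fun y => ?_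
  rw [norm_mul, mul_pow]
  gcongr
  exact ha y

theorem coeff_dirac {G : Type*} [Group G] (ω : G → ℝ) (ξ : MonoidAlgebra ℂ G) (y : G) :
    (dirac ω ξ).coeff y = ω y * ξ.coeff y :=
  rfl

theorem coeff_dirac_commutator_single {G : Type*} [Group G] (ω : G → ℝ) (x : G)
    (ξ : MonoidAlgebra ℂ G) (y : G) :
    (ω y : ℂ) * (MonoidAlgebra.single x (1 : ℂ) * ξ).coeff y -
        (MonoidAlgebra.single x (1 : ℂ) * dirac ω ξ).coeff y =
      ((ω y - ω (x⁻¹ * y) : ℝ) : ℂ) * ξ.coeff (x⁻¹ * y) := by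
  simp only [MonoidAlgebra.coeff_single_mul_apply, one_mul, coeff_dirac, Complex.ofReal_sub,
    sub_mul]

theorem stmt10_general {G : Type*} [Group G] (ω : G → ℝ) (x : G) (C : ℝ)
    (hbound : ∀ y : G, |ω y - ω (x⁻¹ * y)| ≤ C) (ξ : MonoidAlgebra ℂ G) :
    ∑ᶠ y, ‖(ω y : ℂ) * (MonoidAlgebra.single x (1 : ℂ) * ξ).coeff y -
        (MonoidAlgebra.single x (1 : ℂ) * dirac ω ξ).coeff y‖ ^ 2 ≤
      C ^ 2 * ∑ᶠ y, ‖ξ.coeff y‖ ^ 2 := by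
  simp_rw [coeff_dirac_commutator_single]
  rw [← finsum_comp_equiv (Equiv.mulLeft x)]
  simp only [Equiv.coe_mulLeft, inv_mul_cancel_left]
  refine finsum_norm_mul_sq_le (fun z => ?_) ξ.coeff.hasFiniteSupport
  simpa only [Complex.norm_real, Real.norm_eq_abs, inv_mul_cancel_left] using hbound (x * z)

/-- If `|ω(y) - ω(x⁻¹y)| ≤ C` for all `y`, then the commutator `[D_ω, π(δ_x)]` is bounded
on `ℂ[G]` with ℓ²-operator norm at most `C`. -/
theorem stmt10 {G : Type*} [Group G] (ω : G → ℝ) (x : G) (C : ℝ) (hC : 0 ≤ C)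
    (hbound : ∀ y : G, |ω y - ω (x⁻¹ * y)| ≤ C) (ξ : MonoidAlgebra ℂ G) :
    ∑ᶠ y, ‖(ω y : ℂ) * (MonoidAlgebra.single x (1 : ℂ) * ξ).coeff y -
        (MonoidAlgebra.single x (1 : ℂ) * dirac ω ξ).coeff y‖ ^ 2 ≤
      C ^ 2 * ∑ᶠ y, ‖ξ.coeff y‖ ^ 2 :=
  stmt10_general ω x C hbound ξ
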